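/- For all complex numbers u, v, with f(z) = z·ln|z|² (i.e., f(z) = 2z·ln|z|, f(0)=0), the imaginary part of (f(u) - f(v))·conj(u - v) satisfies |Im[(f(u) - f(v))·conj(u - v)]| ≤ |u - v|². -/

import Mathlib

/-!
Since `f z * conj z` is real, `Im[(f u - f v) conj (u - v)] = (ln |v|² - ln |u|²) Im (u conj v)`.
With `r = |u|`, `s = |v|`, the inequality `y ≤ sinh y` for `y ≥ 0` gives `(ln s - ln r)² rs ≤ (s - r)²`.
AM-GM together with `Im (u conj v)² ≤ 2rs (rs - Re (u conj v))` then bounds the product by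
`(s - r)² + 2 (rs - Re (u conj v)) = |u - v|²`.
-/

noncomputable def f (z : ℂ) : ℂ := z * Real.log (‖z‖ ^ 2)

open Real

theorem Real.sq_le_sinh_sq (y : ℝ) : y ^ 2 ≤ sinh y ^ 2 := by
  rw [← sq_abs y, ← sq_abs (sinh y), abs_sinh]
  exact pow_le_pow_left₀ (abs_nonneg y) (self_le_sinh_iff.mpr (abs_nonneg y)) 2

/-- The logarithmic mean of `1` and `t` dominates their geometric mean `√t`: with `y = log t / 2`
we have `t - 1 = exp y * 2 sinh y`, so this is `y² ≤ sinh² y`. -/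
theorem Real.sq_log_mul_le_sq_sub_one {t : ℝ} (ht : 0 < t) : log t ^ 2 * t ≤ (t - 1) ^ 2 := by
  set y := log t / 2
  have ht_eq : t = exp y ^ 2 := by
    rw [← exp_nat_mul, Nat.cast_ofNat, mul_div_cancel₀ _ two_ne_zero, exp_log ht]
  have hsinh : t - 1 = exp y * (2 * sinh y) := by
    rw [sinh_eq, ht_eq, exp_neg]
    field_simp
  calc log t ^ 2 * t = exp y ^ 2 * (4 * y ^ 2) := by rw [← ht_eq]; ring
    _ ≤ exp y ^ 2 * (4 * sinh y ^ 2) := by gcongr ?_ * (4 * ?_); exact sq_le_sinh_sq y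
    _ = (t - 1) ^ 2 := by rw [hsinh]; ring

theorem Real.sq_log_sub_log_mul_le {r s : ℝ} (hr : 0 < r) (hs : 0 < s) :
    (log s - log r) ^ 2 * (r * s) ≤ (s - r) ^ 2 := by
  have h := sq_log_mul_le_sq_sub_one (div_pos hs hr)
  rw [log_div hs.ne' hr.ne'] at h
  calc (log s - log r) ^ 2 * (r * s) = (log s - log r) ^ 2 * (s / r) * r ^ 2 := by field_simp
    _ ≤ (s / r - 1) ^ 2 * r ^ 2 := by gcongr
    _ = (s - r) ^ 2 := by field_simp

theorem two_mul_abs_mul_le {r s c m L : ℝ} (hr : 0 < r) (hs : 0 < s)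
    (hL : L ^ 2 * (r * s) ≤ (s - r) ^ 2) (hcm : c ^ 2 + m ^ 2 = (r * s) ^ 2) :
    2 * |L * m| ≤ r ^ 2 + s ^ 2 - 2 * c := by
  have hp : 0 < r * s := mul_pos hr hs
  have hc : c ≤ r * s := by nlinarith [sq_nonneg m]
  have hamgm : 2 * |L * m| * (r * s) ≤ L ^ 2 * (r * s) ^ 2 + m ^ 2 := by
    rw [abs_mul, ← sq_abs L, ← sq_abs m]
    nlinarith [sq_nonneg (|L| * (r * s) - |m|)]
  refine le_of_mul_le_mul_right ?_ hp
  nlinarith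

theorem Complex.re_sq_add_im_sq_mul_conj (u v : ℂ) :
    (u * (starRingEnd ℂ) v).re ^ 2 + (u * (starRingEnd ℂ) v).im ^ 2 = (‖u‖ * ‖v‖) ^ 2 := by
  rw [← norm_conj v, ← norm_mul, Complex.sq_norm, normSq_apply]
  ring

theorem Complex.sq_norm_sub (u v : ℂ) :
    ‖u - v‖ ^ 2 = ‖u‖ ^ 2 + ‖v‖ ^ 2 - 2 * (u * (starRingEnd ℂ) v).re := by
  simp only [Complex.sq_norm, normSq_sub]

theorem im_sub_f_mul_conj_sub (u v : ℂ) :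
    ((f u - f v) * (starRingEnd ℂ) (u - v)).im
      = (log (‖v‖ ^ 2) - log (‖u‖ ^ 2)) * (u * (starRingEnd ℂ) v).im := by
  simp only [f, map_sub, Complex.mul_im, Complex.mul_re, Complex.sub_re, Complex.sub_im,
    Complex.conj_re, Complex.conj_im, Complex.ofReal_re, Complex.ofReal_im]
  ring

theorem stmt_4 (u v : ℂ) :
    |Complex.im ((f u - f v) * (starRingEnd ℂ) (u - v))| ≤ ‖u - v‖ ^ 2 := by
  rw [im_sub_f_mul_conj_sub]
  rcases eq_or_ne u 0 with rfl | hu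
  · simp
  rcases eq_or_ne v 0 with rfl | hv
  · simp
  have hr := norm_pos_iff.mpr hu
  have hs := norm_pos_iff.mpr hv
  rw [log_pow, log_pow, Complex.sq_norm_sub, ← mul_sub, mul_assoc, abs_mul, Nat.cast_ofNat,
    abs_two]
  exact two_mul_abs_mul_le hr hs (sq_log_sub_log_mul_le hr hs)
    (Complex.re_sq_add_im_sq_mul_conj u v)
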